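/- arXiv:2103.01057 — 4 statements merged into one kernel-verified Lean document; each statement's English description precedes it below -/
import Mathlib

section
/- For every positive integer n, the rational function identity $\sum_{j=0}^{n}\frac{1}{j!^2(n-j)!^2}\Big(\frac{x}{(1-2jx)^2}+\frac{H_{n-j}-H_j}{1-2jx}\Big) = \frac{4^n x^{2n+1}}{\prod_{j=1}^{n}(1-2jx)^2}$ holds for all real (or complex) x with $x \neq 1/(2j)$ for $1\le j\le n$. -/
open Finset

/-- The `n`-th harmonic number `H_n = ∑_{j=1}^n 1/j`, as a complex number, with `H_0 = 0`. -/
noncomputable def H (n : ℕ) : ℂ := ∑ i ∈ Finset.range n, (1 : ℂ) / (i + 1)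

/-!
Put `t = 1/(2x)`, so that `t - j = (1 - 2jx)/(2x)` and the right-hand side is `1/(4x)` times
`(∏_{j=0}^n (t - j))⁻²`. For distinct nodes `vⱼ` with barycentric weights
`wⱼ = ∏_{i≠j} (vⱼ - vᵢ)⁻¹`, partial fractions give `(∏ (t - vⱼ))⁻¹ = ∑ wⱼ/(t - vⱼ)`. Squaring and
splitting each cross term `1/((t - vⱼ)(t - vᵢ))` into simple fractions leaves the coefficients
`∑_{i≠j} wᵢ/(vⱼ - vᵢ)`; differentiating the Lagrange identity `∑ wᵢ ∏_{k≠i} (X - vₖ) = 1` at `vⱼ`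
shows that they equal `-wⱼ ∑_{i≠j} 1/(vⱼ - vᵢ)`. For the nodes `0, …, n` one has
`wⱼ² = 1/(j!² (n-j)!²)` and `∑_{i≠j} 1/(j - i) = H_j - H_{n-j}`. At `x = 0` the identity reduces to
the antisymmetry of `H_{n-j} - H_j` under `j ↦ n - j`.
-/

open Polynomial
open scoped Nat

theorem Finset.sum_sum_erase_comm {ι M : Type*} [DecidableEq ι] [AddCommMonoid M] (s : Finset ι)
    (f : ι → ι → M) :
    ∑ j ∈ s, ∑ i ∈ s.erase j, f j i = ∑ j ∈ s, ∑ i ∈ s.erase j, f i j :=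
  sum_comm' fun j i => by simp only [mem_erase]; tauto

@[to_additive]
theorem Finset.prod_range_succ_erase {M : Type*} [CommMonoid M] (f : ℕ → M) {n j : ℕ}
    (hj : j ≤ n) :
    ∏ i ∈ (range (n + 1)).erase j, f i =
      (∏ i ∈ range j, f i) * ∏ i ∈ range (n - j), f (j + 1 + i) := by
  have hsplit : (range (n + 1)).erase j = range j ∪ Ico (j + 1) (n + 1) := by
    ext i; simp only [mem_erase, mem_range, mem_union, mem_Ico]; omega
  have hdisj : Disjoint (range j) (Ico (j + 1) (n + 1)) :=
    disjoint_left.2 fun i hi hi' => by simp only [mem_range, mem_Ico] at hi hi'; omega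
  rw [hsplit, prod_union hdisj, prod_Ico_eq_prod_range, Nat.add_sub_add_right]

namespace Lagrange

variable {F ι : Type*} [Field F] [DecidableEq ι] {s : Finset ι} {v : ι → F} {i j : ι} {x : F}

theorem inv_eval_nodal_eq_sum (hvs : Set.InjOn v s) (hs : s.Nonempty) (hx : ∀ i ∈ s, x ≠ v i) :
    (eval x (nodal s v))⁻¹ = ∑ i ∈ s, nodalWeight s v i * (x - v i)⁻¹ := by
  have h := eval_interpolate_not_at_node 1 hx
  simp only [interpolate_one hvs hs, eval_one, Pi.one_apply, mul_one] at h
  exact inv_eq_of_mul_eq_one_right h.symm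

theorem sum_C_nodalWeight_mul_nodal_erase (hvs : Set.InjOn v s) (hs : s.Nonempty) :
    ∑ i ∈ s, C (nodalWeight s v i) * nodal (s.erase i) v = 1 := by
  rw [← sum_basis hvs hs]
  exact sum_congr rfl fun i hi => by
    rw [basis_eq_prod_sub_inv_mul_nodal_div hi, nodal_erase_eq_nodal_div hi]

theorem eval_nodal_erase_erase (hvs : Set.InjOn v s) (hj : j ∈ s) (hi : i ∈ s.erase j) :
    eval (v j) (nodal ((s.erase j).erase i) v) = (nodalWeight s v j)⁻¹ * (v j - v i)⁻¹ := by
  have hij : v j - v i ≠ 0 :=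
    sub_ne_zero.2 fun h => (mem_erase.1 hi).1 (hvs (mem_of_mem_erase hi) hj h.symm)
  rw [nodalWeight_eq_eval_nodal_erase_inv, inv_inv, nodal_eq_mul_nodal_erase hi, eval_mul]
  simp only [eval_sub, eval_X, eval_C]
  field_simp

theorem sum_erase_nodalWeight_mul_inv_sub (hvs : Set.InjOn v s) (hj : j ∈ s) :
    ∑ i ∈ s.erase j, nodalWeight s v i * (v j - v i)⁻¹ =
      -(nodalWeight s v j * ∑ i ∈ s.erase j, (v j - v i)⁻¹) := by
  have hw := nodalWeight_ne_zero hvs hj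
  have hder := congrArg (fun p => eval (v j) (derivative p))
    (sum_C_nodalWeight_mul_nodal_erase hvs ⟨j, hj⟩)
  simp only [derivative_sum, derivative_C_mul, eval_finsetSum, eval_mul, eval_C, derivative_one,
    eval_zero] at hder
  rw [← add_sum_erase _ _ hj, derivative_nodal, eval_finsetSum] at hder
  have hself : ∑ i ∈ s.erase j, eval (v j) (nodal ((s.erase j).erase i) v) =
      (nodalWeight s v j)⁻¹ * ∑ i ∈ s.erase j, (v j - v i)⁻¹ := by
    rw [mul_sum]; exact sum_congr rfl fun i hi => eval_nodal_erase_erase hvs hj hi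
  have hother : ∑ i ∈ s.erase j, nodalWeight s v i * eval (v j) (derivative (nodal (s.erase i) v)) =
      (nodalWeight s v j)⁻¹ * ∑ i ∈ s.erase j, nodalWeight s v i * (v j - v i)⁻¹ := by
    rw [mul_sum]
    refine sum_congr rfl fun i hi => ?_
    rw [eval_nodal_derivative_eval_node_eq (mem_erase.2 ⟨(ne_of_mem_erase hi).symm, hj⟩),
      erase_right_comm, eval_nodal_erase_erase hvs hj hi]
    ring
  rw [hself, hother, ← mul_assoc, mul_inv_cancel₀ hw, one_mul] at hder
  linear_combination nodalWeight s v j * hder -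
    (∑ i ∈ s.erase j, nodalWeight s v i * (v j - v i)⁻¹) * mul_inv_cancel₀ hw

theorem sq_sum_mul_inv_sub (a : ι → F) (hvs : Set.InjOn v s) (hx : ∀ i ∈ s, x ≠ v i) :
    (∑ i ∈ s, a i * (x - v i)⁻¹) ^ 2 =
      ∑ j ∈ s, (a j ^ 2 * ((x - v j)⁻¹) ^ 2 +
        2 * (a j * (x - v j)⁻¹) * ∑ i ∈ s.erase j, a i * (v j - v i)⁻¹) := by
  set g : ι → ι → F := fun j i => a j * (x - v j)⁻¹ * (a i * (v j - v i)⁻¹)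
  have hcross : ∀ j ∈ s, ∀ i ∈ s.erase j,
      a j * (x - v j)⁻¹ * (a i * (x - v i)⁻¹) = g j i + g i j := by
    intro j hj i hi
    have hij : v j - v i ≠ 0 :=
      sub_ne_zero.2 fun h => (mem_erase.1 hi).1 (hvs (mem_of_mem_erase hi) hj h.symm)
    have hxj := sub_ne_zero.2 (hx j hj)
    have hxi := sub_ne_zero.2 (hx i (mem_of_mem_erase hi))
    have hji : v i - v j ≠ 0 := by rwa [← neg_sub, neg_ne_zero]
    simp only [g]
    field_simp
    ring
  calc (∑ i ∈ s, a i * (x - v i)⁻¹) ^ 2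
      = ∑ j ∈ s, ((a j * (x - v j)⁻¹) ^ 2 +
          ∑ i ∈ s.erase j, a j * (x - v j)⁻¹ * (a i * (x - v i)⁻¹)) := by
        rw [sq, sum_mul_sum]
        exact sum_congr rfl fun j hj => by rw [← add_sum_erase _ _ hj, sq]
    _ = ∑ j ∈ s, (a j * (x - v j)⁻¹) ^ 2 + 2 * ∑ j ∈ s, ∑ i ∈ s.erase j, g j i := by
        rw [sum_add_distrib, two_mul]
        congr 1
        rw [sum_congr rfl fun j hj => sum_congr rfl (hcross j hj)]
        simp only [sum_add_distrib, sum_sum_erase_comm s (fun j i => g i j)]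
    _ = _ := by
        rw [mul_sum, ← sum_add_distrib]
        exact sum_congr rfl fun j _ => by rw [← mul_sum]; ring

theorem inv_eval_nodal_sq (hvs : Set.InjOn v s) (hs : s.Nonempty) (hx : ∀ i ∈ s, x ≠ v i) :
    (eval x (nodal s v))⁻¹ ^ 2 =
      ∑ j ∈ s, nodalWeight s v j ^ 2 *
        (((x - v j)⁻¹) ^ 2 - 2 * (∑ i ∈ s.erase j, (v j - v i)⁻¹) * (x - v j)⁻¹) := by
  rw [inv_eval_nodal_eq_sum hvs hs hx, sq_sum_mul_inv_sub _ hvs hx]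
  refine sum_congr rfl fun j hj => ?_
  rw [sum_erase_nodalWeight_mul_inv_sub hvs hj]
  ring

end Lagrange

theorem prod_erase_range_natCast_sub {R : Type*} [CommRing R] {n j : ℕ} (hj : j ≤ n) :
    ∏ i ∈ (range (n + 1)).erase j, ((j : R) - i) = (-1) ^ (n - j) * j ! * (n - j)! := by
  have hlow : ∏ i ∈ range j, ((j : R) - i) = j ! := by
    rw [← prod_range_reflect, ← prod_range_add_one_eq_factorial, Nat.cast_prod]
    refine prod_congr rfl fun i hi => ?_
    rw [Nat.sub_sub, Nat.cast_sub (by simp at hi; omega)]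
    push_cast
    ring
  have hhigh : ∏ i ∈ range (n - j), ((j : R) - ↑(j + 1 + i)) = (-1) ^ (n - j) * (n - j)! := by
    rw [prod_congr rfl fun i _ =>
        show (j : R) - ((j + 1 + i : ℕ) : R) = -1 * (i + 1) by push_cast; ring,
      prod_mul_distrib, prod_const, card_range, ← prod_range_add_one_eq_factorial, Nat.cast_prod]
    push_cast
    rfl
  rw [prod_range_succ_erase _ hj, hlow, hhigh]
  ring

theorem Lagrange.nodalWeight_range_natCast_sq {F : Type*} [Field F] {n j : ℕ} (hj : j ≤ n) :
    Lagrange.nodalWeight (range (n + 1)) (Nat.cast : ℕ → F) j ^ 2 =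
      1 / ((j ! : F) ^ 2 * ((n - j)! : F) ^ 2) := by
  rw [Lagrange.nodalWeight, prod_inv_distrib, prod_erase_range_natCast_sub hj, inv_pow,
    one_div, mul_pow, mul_pow, ← pow_mul, mul_comm (n - j), pow_mul, neg_one_sq, one_pow,
    one_mul]

theorem sum_erase_range_inv_natCast_sub {n j : ℕ} (hj : j ≤ n) :
    ∑ i ∈ (range (n + 1)).erase j, ((j : ℂ) - i)⁻¹ = H j - H (n - j) := by
  rw [sum_range_succ_erase _ hj, sub_eq_add_neg, H, H, ← sum_neg_distrib]
  congr 1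
  · rw [← sum_range_reflect]
    refine sum_congr rfl fun i hi => ?_
    rw [Nat.sub_sub, Nat.cast_sub (by simp at hi; omega)]
    push_cast
    ring
  · refine sum_congr rfl fun i _ => ?_
    rw [one_div, ← inv_neg]
    push_cast
    ring

theorem inv_prod_range_sub_natCast_sq (n : ℕ) {t : ℂ} (ht : ∀ i ≤ n, t ≠ i) :
    (∏ i ∈ range (n + 1), (t - i))⁻¹ ^ 2 =
      ∑ j ∈ range (n + 1), 1 / ((j ! : ℂ) ^ 2 * ((n - j)! : ℂ) ^ 2) *
        (((t - j)⁻¹) ^ 2 + 2 * (H (n - j) - H j) * (t - j)⁻¹) := by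
  have hnodes : ∀ i ∈ range (n + 1), t ≠ (i : ℂ) := fun i hi =>
    ht i (Nat.lt_succ_iff.1 (mem_range.1 hi))
  rw [← Lagrange.eval_nodal, Lagrange.inv_eval_nodal_sq Nat.cast_injective.injOn
    nonempty_range_add_one hnodes]
  refine sum_congr rfl fun j hj => ?_
  have hjn := Nat.lt_succ_iff.1 (mem_range.1 hj)
  rw [Lagrange.nodalWeight_range_natCast_sq hjn, sum_erase_range_inv_natCast_sub hjn]
  ring

theorem sum_range_inv_factorial_sq_mul_H_sub (n : ℕ) :
    ∑ j ∈ range (n + 1), 1 / ((j ! : ℂ) ^ 2 * ((n - j)! : ℂ) ^ 2) * (H (n - j) - H j) = 0 := by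
  set f : ℕ → ℂ := fun j => 1 / ((j ! : ℂ) ^ 2 * ((n - j)! : ℂ) ^ 2) * (H (n - j) - H j)
  have hanti : ∀ j ∈ range (n + 1), f (n - j) = -f j := fun j hj => by
    simp only [f, Nat.sub_sub_self (Nat.lt_succ_iff.1 (mem_range.1 hj))]
    ring
  have hrefl : ∑ j ∈ range (n + 1), f j = -∑ j ∈ range (n + 1), f j := by
    rw [← sum_neg_distrib, ← sum_congr rfl hanti, ← sum_range_reflect]
    simp
  linear_combination hrefl / 2

theorem stmt_0_general (n : ℕ) (x : ℂ)
    (hx : ∀ j : ℕ, 1 ≤ j → j ≤ n → x ≠ 1 / (2 * (j : ℂ))) :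
    ∑ j ∈ Finset.range (n + 1),
      (1 / ((j.factorial : ℂ) ^ 2 * ((n - j).factorial : ℂ) ^ 2)) *
        (x / (1 - 2 * (j : ℂ) * x) ^ 2 + (H (n - j) - H j) / (1 - 2 * (j : ℂ) * x))
    = 4 ^ n * x ^ (2 * n + 1) / ∏ j ∈ Finset.Icc 1 n, (1 - 2 * (j : ℂ) * x) ^ 2 := by
  rcases eq_or_ne x 0 with rfl | hx0
  · simpa using sum_range_inv_factorial_sq_mul_H_sub n
  have hu : ∀ j ≤ n, 1 - 2 * (j : ℂ) * x ≠ 0 := fun j hj h => by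
    rcases Nat.eq_zero_or_pos j with rfl | hj0
    · simp at h
    · exact hx j hj0 hj (eq_one_div_of_mul_eq_one_right (by linear_combination -h))
  have hsub : ∀ j : ℕ, (2 * x)⁻¹ - j = (1 - 2 * j * x) / (2 * x) := fun j => by field_simp
  have hprod : ∏ j ∈ range (n + 1), ((2 * x)⁻¹ - j) =
      (∏ j ∈ Icc 1 n, (1 - 2 * (j : ℂ) * x)) / (2 * x) ^ (n + 1) := by
    rw [prod_congr rfl fun j _ => hsub j, prod_div_distrib, prod_const, card_range,
      prod_range_eq_mul_Ico _ (by omega : 0 < n + 1), Ico_add_one_right_eq_Icc]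
    simp
  have key := inv_prod_range_sub_natCast_sq n (t := (2 * x)⁻¹) fun j hj h =>
    hu j hj <| by
      rw [← sub_eq_zero, hsub, div_eq_zero_iff] at h
      exact h.resolve_right (mul_ne_zero two_ne_zero hx0)
  rw [hprod] at key
  simp only [hsub, inv_div] at key
  have hQ : ∏ j ∈ Icc 1 n, (1 - 2 * (j : ℂ) * x) ≠ 0 :=
    prod_ne_zero_iff.2 fun j hj => hu j (mem_Icc.1 hj).2
  apply mul_left_cancel₀ (mul_ne_zero (by norm_num : (4 : ℂ) ≠ 0) hx0)
  calc 4 * x * _ = ((2 * x) ^ (n + 1) / ∏ j ∈ Icc 1 n, (1 - 2 * (j : ℂ) * x)) ^ 2 := by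
        rw [key, mul_sum]
        refine sum_congr rfl fun j hj => ?_
        field_simp [hu j (Nat.lt_succ_iff.1 (mem_range.1 hj))]
        ring
    _ = _ := by
        rw [prod_pow, show (4 : ℂ) ^ n = 2 ^ (2 * n) by rw [pow_mul]; norm_num]
        field_simp
        ring

/-- For every positive integer `n` and every complex `x` with `x ≠ 1/(2j)` for `1 ≤ j ≤ n`,
`∑_{j=0}^{n} (1/(j!² (n-j)!²)) (x/(1-2jx)² + (H_{n-j} - H_j)/(1-2jx))
  = 4ⁿ x^{2n+1} / ∏_{j=1}^{n} (1-2jx)²`. -/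
theorem stmt_0 (n : ℕ) (hn : 1 ≤ n) (x : ℂ)
    (hx : ∀ j : ℕ, 1 ≤ j → j ≤ n → x ≠ 1 / (2 * (j : ℂ))) :
    ∑ j ∈ Finset.range (n + 1),
      (1 / ((j.factorial : ℂ) ^ 2 * ((n - j).factorial : ℂ) ^ 2)) *
        (x / (1 - 2 * (j : ℂ) * x) ^ 2 + (H (n - j) - H j) / (1 - 2 * (j : ℂ) * x))
    = 4 ^ n * x ^ (2 * n + 1) / ∏ j ∈ Finset.Icc 1 n, (1 - 2 * (j : ℂ) * x) ^ 2 :=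
  stmt_0_general n x hx
end

section
/- The function $g(x) = \sum_{n\ge 0}(-\alpha^2/4)^n E_n(x)$, where $E_n(x) = \sum_{j=0}^{n}\frac{e^{2jx}(x+H_{n-j}-H_j)}{j!^2(n-j)!^2}$ and $\alpha$ is any complex number, satisfies the differential equation $g''(x) + \alpha^2 e^{2x} g(x) = 0$. -/
/-!
Put `weightedE a b n x = ∑_{j ≤ n} e^{2jx} (a_j (x + H_{n-j} - H_j) + b_j) / (j!² (n-j)!²)`, so
that `E n = weightedE 1 0 n`. Differentiation in `x` preserves this shape and acts on the weights
by `(a_j, b_j) ↦ (2j a_j, 2j b_j + a_j)`, so `E_n''` has weights `(4j², 4j)`. Its `j = 0` term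
vanishes, and `H_{j+1} = H_j + 1/(j+1)` turns it into `E_{n+1}'' = 4 e^{2x} E_n`; summed against
`(-α²/4)ⁿ` this is the differential equation.

Termwise differentiation is justified by locally uniform bounds: if `|a_j|, |b_j| ≤ (2j+1)^k`, then
`|weightedE a b n y| ≤ (B + 1) Cⁿ / n!` for `|y| ≤ B`, with `C` depending only on `k` and `B`
(from `n! ≤ 2ⁿ j! (n-j)!` and `|H_m| ≤ m`), and differentiating the weights only raises `k` by one.
-/

open Finset

/-- `E_n(x) = ∑_{j=0}^{n} e^{2jx}(x + H_{n-j} - H_j)/(j!² (n-j)!²)` (complex-valued,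
real variable). -/
noncomputable def E (n : ℕ) (x : ℝ) : ℂ :=
  ∑ j ∈ Finset.range (n + 1),
    Complex.exp (2 * j * x) * (x + H (n - j) - H j) /
      ((j.factorial : ℂ) ^ 2 * ((n - j).factorial : ℂ) ^ 2)

open Nat Complex

lemma H_succ (k : ℕ) : H (k + 1) = H k + 1 / (k + 1) := by
  simp [H, sum_range_succ]

lemma norm_H_le (m : ℕ) : ‖H m‖ ≤ m := by
  calc ‖H m‖ ≤ ∑ i ∈ range m, ‖(1 : ℂ) / (i + 1)‖ := norm_sum_le _ _
    _ ≤ ∑ i ∈ range m, 1 := sum_le_sum fun i _ => by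
        rw [norm_div, norm_one, ← Nat.cast_succ, Complex.norm_natCast]
        exact div_le_one_of_le₀ (by simp) (by positivity)
    _ = m := by simp

noncomputable def weightedE (a b : ℕ → ℂ) (n : ℕ) (x : ℝ) : ℂ :=
  ∑ j ∈ range (n + 1),
    exp (2 * j * x) * (a j * (x + H (n - j) - H j) + b j) / ((j ! : ℂ) ^ 2 * ((n - j)! : ℂ) ^ 2)

lemma E_eq_weightedE (n : ℕ) : E n = weightedE 1 0 n := by
  ext x
  simp [E, weightedE]

lemma hasDerivAt_weightedE (a b : ℕ → ℂ) (n : ℕ) (x : ℝ) :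
    HasDerivAt (weightedE a b n)
      (weightedE (fun j => 2 * j * a j) (fun j => 2 * j * b j + a j) n x) x := by
  refine HasDerivAt.fun_sum fun j _ => ?_
  have hx : HasDerivAt (fun y : ℝ => (y : ℂ)) 1 x := (hasDerivAt_id x).ofReal_comp
  have hexp : HasDerivAt (fun y : ℝ => exp (2 * j * y)) (exp (2 * j * x) * (2 * j)) x := by
    simpa using (hx.const_mul (2 * j : ℂ)).cexp
  have hweight : HasDerivAt (fun y : ℝ => a j * (y + H (n - j) - H j) + b j) (a j) x := by
    simpa using (((hx.add_const _).sub_const _).const_mul (a j)).add_const (b j)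
  exact ((hexp.fun_mul hweight).div_const _).congr_deriv (by ring)

lemma weightedE_zero_of_apply_zero {a b : ℕ → ℂ} (ha : a 0 = 0) (hb : b 0 = 0) (x : ℝ) :
    weightedE a b 0 x = 0 := by
  simp [weightedE, ha, hb]

lemma weightedE_succ_eq {a b : ℕ → ℂ} (ha : ∀ j, a j = 4 * j ^ 2) (hb : ∀ j, b j = 4 * j)
    (n : ℕ) (x : ℝ) : weightedE a b (n + 1) x = 4 * exp (2 * x) * E n x := by
  simp only [weightedE, ha, hb]
  rw [sum_range_succ', E, mul_sum]
  simp only [Nat.cast_zero, mul_zero, zero_mul, zero_pow two_ne_zero, add_zero, zero_div]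
  refine sum_congr rfl fun k _ => ?_
  have hsub : n + 1 - (k + 1) = n - k := by omega
  have hk1 : (k + 1 : ℂ) ≠ 0 := by exact_mod_cast k.succ_ne_zero
  have hexp : exp (2 * (k + 1 : ℕ) * x) = exp (2 * x) * exp (2 * k * x) := by
    rw [← exp_add]; push_cast; ring_nf
  rw [hsub, factorial_succ, H_succ, hexp]
  push_cast
  field_simp
  ring

def WeightBound (k : ℕ) (a b : ℕ → ℂ) : Prop :=
  ∀ j : ℕ, ‖a j‖ ≤ (2 * j + 1 : ℝ) ^ k ∧ ‖b j‖ ≤ (2 * j + 1 : ℝ) ^ k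

lemma WeightBound.deriv {k : ℕ} {a b : ℕ → ℂ} (h : WeightBound k a b) :
    WeightBound (k + 1) (fun j => 2 * j * a j) (fun j => 2 * j * b j + a j) := by
  intro j
  obtain ⟨ha, hb⟩ := h j
  have hj : ‖(2 * j : ℂ)‖ = 2 * j := by norm_cast
  have hpow : (0 : ℝ) ≤ (2 * j + 1) ^ k := by positivity
  constructor
  · rw [norm_mul, hj, pow_succ]
    nlinarith [norm_nonneg (a j)]
  · refine (norm_add_le _ _).trans ?_
    rw [norm_mul, hj, pow_succ]
    nlinarith [norm_nonneg (b j)]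

lemma norm_weight_le {k : ℕ} {a b : ℕ → ℂ} (h : WeightBound k a b) {n j : ℕ} (hj : j ≤ n)
    (y : ℝ) : ‖a j * (y + H (n - j) - H j) + b j‖ ≤ (2 * n + 1 : ℝ) ^ k * (|y| + n + 1) := by
  obtain ⟨ha, hb⟩ := h j
  have hjn : (2 * j + 1 : ℝ) ^ k ≤ (2 * n + 1) ^ k := by gcongr
  have haff : ‖(y : ℂ) + H (n - j) - H j‖ ≤ |y| + n := by
    calc ‖(y : ℂ) + H (n - j) - H j‖ ≤ ‖(y : ℂ)‖ + ‖H (n - j)‖ + ‖H j‖ :=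
          (norm_sub_le _ _).trans (by gcongr; exact norm_add_le _ _)
      _ ≤ |y| + (n - j : ℕ) + j := by
          rw [Complex.norm_real, Real.norm_eq_abs]; gcongr <;> exact norm_H_le _
      _ = |y| + n := by rw [Nat.cast_sub hj]; ring
  calc ‖a j * (y + H (n - j) - H j) + b j‖ ≤ ‖a j‖ * ‖(y : ℂ) + H (n - j) - H j‖ + ‖b j‖ :=
        (norm_add_le _ _).trans (by rw [norm_mul])
    _ ≤ (2 * n + 1 : ℝ) ^ k * (|y| + n) + (2 * n + 1) ^ k := by
        gcongr
        · exact ha.trans hjn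
        · exact hb.trans hjn
    _ = (2 * n + 1 : ℝ) ^ k * (|y| + n + 1) := by ring

lemma factorial_le_two_pow_mul {n j : ℕ} (hj : j ≤ n) : n ! ≤ 2 ^ n * (j ! * (n - j)!) := by
  rw [← choose_mul_factorial_mul_factorial hj, mul_assoc]
  exact Nat.mul_le_mul_right _ (choose_le_two_pow n j)

lemma factorial_sq_le_four_pow_mul {n j : ℕ} (hj : j ≤ n) :
    (n ! : ℝ) ^ 2 ≤ 4 ^ n * ((j ! : ℝ) ^ 2 * ((n - j)! : ℝ) ^ 2) := by
  calc (n ! : ℝ) ^ 2 ≤ ((2 ^ n * (j ! * (n - j)!) : ℕ) : ℝ) ^ 2 := by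
        gcongr; exact_mod_cast factorial_le_two_pow_mul hj
    _ = _ := by
        rw [show (4 : ℝ) ^ n = (2 ^ n) ^ 2 by rw [← pow_mul, mul_comm, pow_mul]; norm_num]
        push_cast; ring

lemma norm_exp_two_mul_le {j n : ℕ} (hj : j ≤ n) (y : ℝ) :
    ‖exp (2 * j * y)‖ ≤ Real.exp (2 * |y|) ^ n := by
  rw [← Real.exp_nat_mul, show (2 * j * y : ℂ) = ((2 * j * y : ℝ) : ℂ) by push_cast; ring,
    norm_exp_ofReal]
  refine Real.exp_le_exp.mpr ?_
  have hjn : (j : ℝ) ≤ n := by exact_mod_cast hj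
  calc 2 * j * y ≤ 2 * j * |y| := by gcongr; exact le_abs_self y
    _ ≤ n * (2 * |y|) := by nlinarith [abs_nonneg y]

lemma norm_weightedE_term_le {k : ℕ} {a b : ℕ → ℂ} (h : WeightBound k a b) {n j : ℕ}
    (hj : j ≤ n) (y : ℝ) :
    ‖exp (2 * j * y) * (a j * (y + H (n - j) - H j) + b j) / ((j ! : ℂ) ^ 2 * ((n - j)! : ℂ) ^ 2)‖
      ≤ (2 * n + 1) ^ k * (|y| + n + 1) * (4 * Real.exp (2 * |y|)) ^ n / (n ! : ℝ) ^ 2 := by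
  rw [norm_div, norm_mul, norm_mul, norm_pow, norm_pow, Complex.norm_natCast,
    Complex.norm_natCast, div_le_div_iff₀ (by positivity) (by positivity)]
  calc ‖exp (2 * j * y)‖ * ‖a j * (y + H (n - j) - H j) + b j‖ * (n ! : ℝ) ^ 2
      ≤ Real.exp (2 * |y|) ^ n * ((2 * n + 1) ^ k * (|y| + n + 1)) *
          (4 ^ n * ((j ! : ℝ) ^ 2 * ((n - j)! : ℝ) ^ 2)) := by
        gcongr
        · exact norm_exp_two_mul_le hj y
        · exact norm_weight_le h hj y
        · exact factorial_sq_le_four_pow_mul hj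
    _ = _ := by ring

lemma two_mul_add_one_le_three_pow (n : ℕ) : (2 * n + 1 : ℝ) ≤ 3 ^ n := by
  have := one_add_mul_le_pow (show (-2 : ℝ) ≤ 2 by norm_num) n
  norm_num at this
  linarith

lemma norm_weightedE_le {k : ℕ} {a b : ℕ → ℂ} (h : WeightBound k a b) (n : ℕ) {y B : ℝ}
    (hy : |y| ≤ B) :
    ‖weightedE a b n y‖ ≤ (B + 1) * (4 * 3 ^ (k + 2) * Real.exp (2 * B)) ^ n / n ! := by
  have hB : 0 ≤ B := (abs_nonneg y).trans hy
  have hn : (0 : ℝ) ≤ n := n.cast_nonneg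
  have hpoly : (n + 1) * (|y| + n + 1) ≤ (B + 1) * (2 * n + 1 : ℝ) ^ 2 := by
    nlinarith [mul_nonneg hB hn, mul_nonneg hn hn]
  have hfac : (n ! : ℝ) ≤ (n ! : ℝ) ^ 2 := by
    have : (1 : ℝ) ≤ n ! := by exact_mod_cast n.factorial_pos
    nlinarith
  calc ‖weightedE a b n y‖
      ≤ ∑ j ∈ range (n + 1),
          (2 * n + 1) ^ k * (|y| + n + 1) * (4 * Real.exp (2 * |y|)) ^ n / (n ! : ℝ) ^ 2 :=
        (norm_sum_le _ _).trans <| sum_le_sum fun j hj =>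
          norm_weightedE_term_le h (Nat.lt_succ_iff.mp (mem_range.mp hj)) y
    _ = (n + 1) * (|y| + n + 1) * (2 * n + 1) ^ k * (4 * Real.exp (2 * |y|)) ^ n
          / (n ! : ℝ) ^ 2 := by
        rw [sum_const, card_range, nsmul_eq_mul]; push_cast; ring
    _ ≤ (B + 1) * (2 * n + 1 : ℝ) ^ 2 * (2 * n + 1) ^ k * (4 * Real.exp (2 * B)) ^ n / n ! := by
        gcongr
    _ = (B + 1) * (2 * n + 1 : ℝ) ^ (k + 2) * (4 * Real.exp (2 * B)) ^ n / n ! := by ring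
    _ ≤ (B + 1) * ((3 : ℝ) ^ n) ^ (k + 2) * (4 * Real.exp (2 * B)) ^ n / n ! := by
        gcongr; exact two_mul_add_one_le_three_pow n
    _ = (B + 1) * (4 * 3 ^ (k + 2) * Real.exp (2 * B)) ^ n / n ! := by
        rw [mul_pow, mul_pow, mul_pow, ← pow_mul, ← pow_mul, mul_comm n]; ring

lemma norm_pow_mul_weightedE_le (c : ℂ) {k : ℕ} {a b : ℕ → ℂ} (h : WeightBound k a b) (n : ℕ)
    {y B : ℝ} (hy : |y| ≤ B) :
    ‖c ^ n * weightedE a b n y‖ ≤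
      (B + 1) * ((‖c‖ * (4 * 3 ^ (k + 2) * Real.exp (2 * B))) ^ n / n !) := by
  rw [norm_mul, norm_pow, mul_pow]
  calc ‖c‖ ^ n * ‖weightedE a b n y‖
      ≤ ‖c‖ ^ n * ((B + 1) * (4 * 3 ^ (k + 2) * Real.exp (2 * B)) ^ n / n !) := by
        gcongr; exact norm_weightedE_le h n hy
    _ = _ := by ring

lemma summable_pow_mul_weightedE (c : ℂ) {k : ℕ} {a b : ℕ → ℂ} (h : WeightBound k a b)
    (y : ℝ) : Summable fun n => c ^ n * weightedE a b n y :=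
  .of_norm_bounded ((Real.summable_pow_div_factorial _).mul_left _)
    fun n => norm_pow_mul_weightedE_le c h n le_rfl

theorem hasDerivAt_tsum_pow_mul_weightedE (c : ℂ) {k : ℕ} {a b : ℕ → ℂ}
    (h : WeightBound k a b) (x : ℝ) :
    HasDerivAt (fun y => ∑' n, c ^ n * weightedE a b n y)
      (∑' n, c ^ n * weightedE (fun j => 2 * j * a j) (fun j => 2 * j * b j + a j) n x) x := by
  have hball : ∀ y ∈ Metric.ball x 1, |y| ≤ |x| + 1 := fun y hy => by
    have := abs_sub_abs_le_abs_sub y x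
    rw [Metric.mem_ball, Real.dist_eq] at hy
    linarith
  exact hasDerivAt_tsum_of_isPreconnected ((Real.summable_pow_div_factorial _).mul_left _)
    Metric.isOpen_ball (convex_ball x 1).isPreconnected
    (fun n y _ => (hasDerivAt_weightedE a b n y).const_mul _)
    (fun n y hy => norm_pow_mul_weightedE_le c h.deriv n (hball y hy))
    (Metric.mem_ball_self one_pos) (summable_pow_mul_weightedE c h x)
    (Metric.mem_ball_self one_pos)

/-- For any complex `α`, the function `g(x) = ∑_{n≥0} (-α²/4)ⁿ Eₙ(x)` satisfies
`g''(x) + α² e^{2x} g(x) = 0`. -/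
theorem stmt_3 (α : ℂ) (g : ℝ → ℂ) (hg : ∀ x : ℝ, g x = ∑' n : ℕ, (-(α ^ 2) / 4) ^ n * E n x)
    (x : ℝ) :
    deriv (deriv g) x + α ^ 2 * Complex.exp (2 * x) * g x = 0 := by
  set c := -(α ^ 2) / 4 with hc
  have h0 : WeightBound 0 1 0 := fun j => by simp
  have hg_eq : g = fun y => ∑' n, c ^ n * weightedE 1 0 n y :=
    funext fun y => by simp only [hg, E_eq_weightedE]
  have hg' : deriv g = _ :=
    funext fun y => hg_eq ▸ (hasDerivAt_tsum_pow_mul_weightedE c h0 y).deriv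
  have hg'' := (hasDerivAt_tsum_pow_mul_weightedE c h0.deriv x).deriv
  rw [← hg'] at hg''
  rw [hg'', (summable_pow_mul_weightedE c h0.deriv.deriv x).tsum_eq_zero_add, hg x]
  simp only [Pi.one_apply, Pi.zero_apply, mul_one, mul_zero, zero_add]
  have hshift (n : ℕ) :
      c ^ (n + 1) * weightedE (fun j => 2 * j * (2 * j)) (fun j => 2 * j + 2 * j) (n + 1) x
        = 4 * c * exp (2 * x) * (c ^ n * E n x) := by
    rw [weightedE_succ_eq (fun j => by ring) (fun j => by ring), pow_succ]; ring
  rw [tsum_congr hshift, tsum_mul_left, weightedE_zero_of_apply_zero (by simp) (by simp), hc]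
  ring
end

section
/- For all complex z with $|z|<1$, $z^2\psi^{(1)}(1-z) - z^2\psi^{(1)}(1+z) = \sum_{k\ge 1}4k\,\zeta(2k+1)\,z^{2k+1}$, where $\psi^{(1)}$ is the trigamma function. -/
open Complex

/-- The trigamma function `ψ⁽¹⁾(z) = ∑_{n≥0} 1/(z+n)²` (valid on `Re z > 0`, which covers
the arguments `1 ± z` with `|z| < 1` used below). -/
noncomputable def trigamma (z : ℂ) : ℂ := ∑' n : ℕ, 1 / (z + n) ^ 2

lemma aux_norm_nat_add_one (n : ℕ) : ‖((n : ℂ) + 1)‖ = (n : ℝ) + 1 := by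
  rw [show ((n : ℂ) + 1) = ((n + 1 : ℕ) : ℂ) by push_cast; ring, Complex.norm_natCast]
  push_cast; ring

lemma aux_g1_summable : Summable (fun n : ℕ => 1 / ((n : ℝ) + 1) ^ 2) := by
  have h := Real.summable_one_div_nat_pow.mpr (one_lt_two (α := ℕ))
  have := (summable_nat_add_iff 1).mpr h
  exact this.congr fun n => by push_cast; ring

/-- `∑_{m≥0} (m+1) w^m = 1/(1-w)²` for `‖w‖ < 1`. -/
lemma aux_hasSum_succ_mul_geometric {w : ℂ} (hw : ‖w‖ < 1) :
    HasSum (fun m : ℕ => ((m : ℂ) + 1) * w ^ m) (1 / (1 - w) ^ 2) := by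
  have h1 := hasSum_coe_mul_geometric_of_norm_lt_one hw
  have h2 := hasSum_geometric_of_norm_lt_one hw
  have hw1 : (1 : ℂ) - w ≠ 0 := by
    intro h
    rw [sub_eq_zero] at h
    rw [← h] at hw
    simp at hw
  have h3 := h1.add h2
  convert h3 using 1
  · rfl
  · funext m; ring
  · rw [inv_eq_one_div]; field_simp; ring

/-- For all complex `z` with `|z| < 1`,
`z²ψ⁽¹⁾(1-z) - z²ψ⁽¹⁾(1+z) = ∑_{k≥1} 4k ζ(2k+1) z^{2k+1}`; the sum over `k ≥ 1` is
indexed by `k : ℕ` via `k ↦ k+1`. -/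
theorem stmt_9 (z : ℂ) (hz : ‖z‖ < 1) :
    z ^ 2 * trigamma (1 - z) - z ^ 2 * trigamma (1 + z)
    = ∑' k : ℕ, 4 * ((k : ℂ) + 1) * riemannZeta (2 * (k + 1) + 1) * z ^ (2 * (k + 1) + 1) := by
  set r : ℝ := ‖z‖ with hrdef
  have hr0 : 0 ≤ r := norm_nonneg z
  set F : ℕ × ℕ → ℂ :=
    fun p => 4 * ((p.2 : ℂ) + 1) * z ^ (2 * (p.2 + 1) + 1) / ((p.1 : ℂ) + 1) ^ (2 * (p.2 + 1) + 1)
    with hFdef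
  have hne : ∀ (n : ℕ) (u : ℂ), ‖u‖ < 1 → ((n : ℂ) + 1) - u ≠ 0 := by
    intro n u hu h0
    have : ‖((n : ℂ) + 1)‖ = ‖u‖ := by rw [sub_eq_zero] at h0; rw [h0]
    rw [aux_norm_nat_add_one] at this
    have : (n : ℝ) + 1 < 1 := this ▸ hu
    have : (0 : ℝ) ≤ (n : ℝ) := Nat.cast_nonneg n
    linarith
  -- row sums
  have key : ∀ (n : ℕ) (u : ℂ), ‖u‖ < 1 →
      HasSum (fun m : ℕ => ((m : ℂ) + 1) * u ^ m / ((n : ℂ) + 1) ^ (m + 2))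
        (1 / (((n : ℂ) + 1) - u) ^ 2) := by
    intro n u hu
    set c : ℂ := (n : ℂ) + 1 with hc
    have hcnorm : ‖c‖ = (n : ℝ) + 1 := by rw [hc]; exact aux_norm_nat_add_one n
    clear_value c
    have hc0 : c ≠ 0 := by
      intro h; rw [h, norm_zero] at hcnorm
      have : (0:ℝ) ≤ (n:ℝ) := Nat.cast_nonneg n; linarith
    have hw : ‖u / c‖ < 1 := by
      rw [norm_div, hcnorm]
      have h1 : (1 : ℝ) ≤ (n : ℝ) + 1 := by have : (0:ℝ) ≤ (n:ℝ) := Nat.cast_nonneg n; linarith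
      calc ‖u‖ / ((n : ℝ) + 1) ≤ ‖u‖ / 1 := by
            apply div_le_div_of_nonneg_left (norm_nonneg u) one_pos h1
        _ = ‖u‖ := by rw [div_one]
        _ < 1 := hu
    have hcu : c - u ≠ 0 := by rw [hc]; exact hne n u hu
    have h := (aux_hasSum_succ_mul_geometric hw).mul_left (1 / c ^ 2)
    have hw1 : (1 : ℂ) - u / c ≠ 0 := by
      intro h0
      apply hcu
      have : c * (1 - u / c) = c - u := by field_simp
      rw [h0, mul_zero] at this
      exact this.symm
    convert h using 1
    · rfl
    · funext m
      rw [div_pow, pow_add]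
      ring
    · rw [show c - u = c * (1 - u / c) by field_simp]
      rw [mul_pow]
      field_simp
  have hrow : ∀ n : ℕ, HasSum (fun k => F (n, k))
      (z ^ 2 * (1 / (((n : ℂ) + 1) - z) ^ 2 - 1 / (((n : ℂ) + 1) + z) ^ 2)) := by
    intro n
    have hz' : ‖-z‖ < 1 := by rwa [norm_neg]
    have hA := key n z hz
    have hB := key n (-z) hz'
    rw [sub_neg_eq_add] at hB
    have hsub := (hA.sub hB).mul_left (z ^ 2)
    set f : ℕ → ℂ := fun m => z ^ 2 * (((m : ℂ) + 1) * z ^ m / ((n : ℂ) + 1) ^ (m + 2)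
      - ((m : ℂ) + 1) * (-z) ^ m / ((n : ℂ) + 1) ^ (m + 2)) with hfdef
    have hinj : Function.Injective (fun k : ℕ => 2 * k + 1) := by
      intro a b h; simp only at h; omega
    have hvanish : ∀ m : ℕ, m ∉ Set.range (fun k : ℕ => 2 * k + 1) → f m = 0 := by
      intro m hm
      have hev : Even m := by
        rcases Nat.even_or_odd m with h | h
        · exact h
        · obtain ⟨j, hj⟩ := h
          exact absurd ⟨j, by simp only []; omega⟩ hm
      rw [hfdef]
      simp only [hev.neg_pow, sub_self, mul_zero]
    have hs : HasSum (f ∘ fun k : ℕ => 2 * k + 1)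
        (z ^ 2 * (1 / (((n : ℂ) + 1) - z) ^ 2 - 1 / (((n : ℂ) + 1) + z) ^ 2)) :=
      (hinj.hasSum_iff hvanish).mpr hsub
    convert hs using 1
    funext k
    show F (n, k) = f (2 * k + 1)
    rw [hfdef, hFdef]
    have hodd : Odd (2 * k + 1) := ⟨k, rfl⟩
    simp only [hodd.neg_pow]
    push_cast
    ring
  -- column sums
  have hcol : ∀ k : ℕ, HasSum (fun n => F (n, k))
      (4 * ((k : ℂ) + 1) * riemannZeta (2 * (k + 1) + 1) * z ^ (2 * (k + 1) + 1)) := by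
    intro k
    have hsum : Summable (fun n : ℕ => 1 / ((n : ℂ) + 1) ^ (2 * (k + 1) + 1)) := by
      apply Summable.of_norm_bounded aux_g1_summable
      intro n
      rw [norm_div, norm_one, norm_pow, aux_norm_nat_add_one]
      have h1 : (1 : ℝ) ≤ (n : ℝ) + 1 := by
        have : (0:ℝ) ≤ (n:ℝ) := Nat.cast_nonneg n; linarith
      apply div_le_div_of_nonneg_left one_pos.le (by positivity)
      exact pow_le_pow_right₀ h1 (by omega)
    have hcast : ((2 * (k + 1) + 1 : ℕ) : ℂ) = 2 * ((k : ℂ) + 1) + 1 := by push_cast; ring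
    have hre : 1 < ((2 * (k + 1) + 1 : ℕ) : ℂ).re := by
      rw [Complex.natCast_re]
      exact_mod_cast (by omega : 1 < 2 * (k + 1) + 1)
    have hzeta : riemannZeta (2 * ((k : ℂ) + 1) + 1)
        = ∑' n : ℕ, 1 / ((n : ℂ) + 1) ^ (2 * (k + 1) + 1) := by
      rw [← hcast, zeta_eq_tsum_one_div_nat_add_one_cpow hre]
      exact tsum_congr fun n => by rw [cpow_natCast]
    have h := hsum.hasSum.mul_left (4 * ((k : ℂ) + 1) * z ^ (2 * (k + 1) + 1))
    rw [← hzeta] at h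
    convert h using 1
    · rfl
    · funext n
      rw [hFdef]
      simp only [mul_one_div]
    · ring
  -- summability of F over ℕ × ℕ
  have hg2 : Summable (fun k : ℕ => 4 * ((k : ℝ) + 1) * r ^ (2 * k + 1)) := by
    have hr2 : ‖r ^ 2‖ < 1 := by
      rw [Real.norm_eq_abs, _root_.abs_of_nonneg (by positivity)]
      nlinarith
    have hA := summable_pow_mul_geometric_of_norm_lt_one 1 hr2
    have hB := summable_geometric_of_norm_lt_one hr2
    have := (hA.add hB).mul_left (4 * r)
    apply this.congr
    intro k
    rw [show r ^ (2 * k + 1) = (r ^ 2) ^ k * r by rw [← pow_mul]; ring]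
    ring
  have hbound : ∀ p : ℕ × ℕ,
      ‖F p‖ ≤ (1 / ((p.1 : ℝ) + 1) ^ 2) * (4 * ((p.2 : ℝ) + 1) * r ^ (2 * p.2 + 1)) := by
    rintro ⟨n, k⟩
    have hn1 : (1 : ℝ) ≤ (n : ℝ) + 1 := by
      have : (0:ℝ) ≤ (n:ℝ) := Nat.cast_nonneg n; linarith
    have hnF : ‖F (n, k)‖
        = 4 * ((k : ℝ) + 1) * r ^ (2 * (k + 1) + 1) / ((n : ℝ) + 1) ^ (2 * (k + 1) + 1) := by
      rw [hFdef]
      simp only [norm_div, norm_mul, norm_pow, aux_norm_nat_add_one, hrdef]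
      norm_num
    rw [hnF, show (1 / ((n : ℝ) + 1) ^ 2) * (4 * ((k : ℝ) + 1) * r ^ (2 * k + 1))
      = 4 * ((k : ℝ) + 1) * r ^ (2 * k + 1) / ((n : ℝ) + 1) ^ 2 by ring]
    apply div_le_div₀ (by positivity) ?_ (by positivity) ?_
    · exact mul_le_mul_of_nonneg_left (pow_le_pow_of_le_one hr0 hz.le (by omega)) (by positivity)
    · exact pow_le_pow_right₀ hn1 (by omega)
  have hg1pos : ∀ n : ℕ, (0:ℝ) ≤ 1 / ((n : ℝ) + 1) ^ 2 := fun n => by positivity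
  have hg2pos : ∀ k : ℕ, (0:ℝ) ≤ 4 * ((k : ℝ) + 1) * r ^ (2 * k + 1) := fun k => by positivity
  have hFsum : Summable F :=
    Summable.of_norm_bounded (aux_g1_summable.mul_of_nonneg hg2 hg1pos hg2pos) hbound
  have hT := hFsum.hasSum
  set T := ∑' p, F p with hTdef
  have hrows : HasSum
      (fun n : ℕ => z ^ 2 * (1 / (((n : ℂ) + 1) - z) ^ 2 - 1 / (((n : ℂ) + 1) + z) ^ 2)) T :=
    hT.prod_fiberwise hrow
  have hswap : HasSum (F ∘ (Equiv.prodComm ℕ ℕ)) T := (Equiv.hasSum_iff _).mpr hT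
  have hcols : HasSum
      (fun k : ℕ => 4 * ((k : ℂ) + 1) * riemannZeta (2 * (k + 1) + 1) * z ^ (2 * (k + 1) + 1)) T :=
    hswap.prod_fiberwise fun k => hcol k
  rw [hcols.tsum_eq]
  -- left-hand side
  have hsummand : ∀ (u : ℂ), ‖u‖ < 1 → Summable (fun n : ℕ => 1 / (((n : ℂ) + 1) - u) ^ 2) := by
    intro u hu
    apply Summable.of_norm_bounded (aux_g1_summable.mul_left (((1 - ‖u‖) ^ 2)⁻¹))
    intro n
    have hn1 : (1 : ℝ) ≤ (n : ℝ) + 1 := by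
      have : (0:ℝ) ≤ (n:ℝ) := Nat.cast_nonneg n; linarith
    have hlow : (1 - ‖u‖) * ((n : ℝ) + 1) ≤ ‖((n : ℂ) + 1) - u‖ := by
      have h1 : ‖((n : ℂ) + 1)‖ - ‖u‖ ≤ ‖((n : ℂ) + 1) - u‖ :=
        norm_sub_norm_le _ _
      rw [aux_norm_nat_add_one] at h1
      nlinarith [norm_nonneg u]
    have hpos : (0:ℝ) < (1 - ‖u‖) * ((n : ℝ) + 1) := by nlinarith
    rw [norm_div, norm_one, norm_pow]
    calc 1 / ‖((n : ℂ) + 1) - u‖ ^ 2 ≤ 1 / ((1 - ‖u‖) * ((n : ℝ) + 1)) ^ 2 := by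
          apply div_le_div_of_nonneg_left one_pos.le (by positivity)
          exact pow_le_pow_left₀ hpos.le hlow 2
      _ = ((1 - ‖u‖) ^ 2)⁻¹ * (1 / ((n : ℝ) + 1) ^ 2) := by
          rw [mul_pow]; field_simp
  have ha : Summable (fun n : ℕ => 1 / (((n : ℂ) + 1) - z) ^ 2) := hsummand z hz
  have hb : Summable (fun n : ℕ => 1 / (((n : ℂ) + 1) + z) ^ 2) := by
    have := hsummand (-z) (by rwa [norm_neg])
    apply this.congr
    intro n
    rw [sub_neg_eq_add]
  have htri1 : trigamma (1 - z) = ∑' n : ℕ, 1 / (((n : ℂ) + 1) - z) ^ 2 := by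
    unfold trigamma
    exact tsum_congr fun n => by rw [show (1 : ℂ) - z + n = ((n : ℂ) + 1) - z by ring]
  have htri2 : trigamma (1 + z) = ∑' n : ℕ, 1 / (((n : ℂ) + 1) + z) ^ 2 := by
    unfold trigamma
    exact tsum_congr fun n => by rw [show (1 : ℂ) + z + n = ((n : ℂ) + 1) + z by ring]
  have hLHS : HasSum
      (fun n : ℕ => z ^ 2 * (1 / (((n : ℂ) + 1) - z) ^ 2 - 1 / (((n : ℂ) + 1) + z) ^ 2))
      (z ^ 2 * trigamma (1 - z) - z ^ 2 * trigamma (1 + z)) := by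
    rw [htri1, htri2]
    have := (ha.hasSum.mul_left (z ^ 2)).sub (hb.hasSum.mul_left (z ^ 2))
    simpa [mul_sub] using this
  exact hLHS.unique hrows
end

section
/- For any word w in the alphabet $\{x_0,x_1\}$ ending in $x_1$ and any integer $k\ge 0$, the multiple polylogarithm satisfies the convolution identity $\mathrm{Li}_{x_0^{k+1}w}(z) = \frac{1}{k!}\int_0^z \mathrm{Li}_w(t)\log^k(z/t)\,\frac{dt}{t}$ for z in the closed unit disk. -/
open Finset intervalIntegral

/-- `liAux [m_s, ..., m_1] n = ∑_{0 < n_1 < ⋯ < n_s < n} ∏ᵢ 1/nᵢ^{mᵢ}` (note the reversed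
indexing: the head of the list is the outermost index). -/
noncomputable def liAux : List ℕ → ℕ → ℂ
  | [], _ => 1
  | m :: R, n => ∑ k ∈ Finset.range n, liAux R k / (k : ℂ) ^ m

/-- The one-variable multiple polylogarithm
`Li_{m_1,…,m_r}(z) = ∑_{0<n_1<⋯<n_r} z^{n_r}/(n_1^{m_1}⋯n_r^{m_r})`,
indexed by the composition `M = [m_1, …, m_r]` (equivalently by the word
`x_0^{m_r-1}x_1⋯x_0^{m_1-1}x_1` ending in `x_1`), defined as the limit of its
partial sums in `n_r`. -/
noncomputable def Li (M : List ℕ) (z : ℂ) : ℂ :=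
  Filter.limUnder Filter.atTop (fun N : ℕ =>
    ∑ n ∈ Finset.range (N + 1),
      liAux M.reverse.tail n * z ^ n / (n : ℂ) ^ (M.reverse.headD 0))

lemma l0 (n : ℕ) : 0 ≤ 1 + Real.log n := by
  have : 0 ≤ Real.log n := by
    cases n with
    | zero => simp
    | succ p => exact Real.log_nonneg (by exact_mod_cast Nat.one_le_iff_ne_zero.mpr (by simp))
  linarith

lemma l1 (n : ℕ) : ∑ j ∈ Finset.range n, ((j : ℝ))⁻¹ ≤ 1 + Real.log n := by
  cases n with
  | zero => simp
  | succ p =>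
    rw [Finset.sum_range_succ']
    simp only [Nat.cast_zero, inv_zero, add_zero]
    push_cast
    have h1 : ∑ i ∈ Finset.range p, ((i : ℝ) + 1)⁻¹ = (harmonic p : ℝ) := by
      rw [harmonic]; push_cast; rfl
    have h2 : (harmonic p : ℝ) ≤ 1 + Real.log p := harmonic_le_one_add_log p
    have h3 : Real.log p ≤ Real.log (p + 1) := by
      cases p with
      | zero => simp
      | succ q =>
        apply Real.log_le_log (by positivity)
        push_cast; linarith
    calc ∑ i ∈ Finset.range p, ((i : ℝ) + 1)⁻¹ = (harmonic p : ℝ) := h1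
      _ ≤ 1 + Real.log p := h2
      _ ≤ 1 + Real.log ((p : ℝ) + 1) := by linarith

lemma l2 : ∀ (R : List ℕ), (∀ x ∈ R, 1 ≤ x) → ∀ n : ℕ, ‖liAux R n‖ ≤ (1 + Real.log n) ^ R.length
  | [], _, n => by simp [liAux]
  | (q :: R), hR, n => by
    have hq : 1 ≤ q := hR q (by simp)
    have hR' : ∀ x ∈ R, 1 ≤ x := fun x hx => hR x (List.mem_cons_of_mem _ hx)
    have IH := l2 R hR'
    have key : ∀ j ∈ Finset.range n,
        ‖liAux R j / (j : ℂ) ^ q‖ ≤ (1 + Real.log n) ^ R.length * ((j : ℝ))⁻¹ := by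
      intro j hj
      rw [norm_div, norm_pow, Complex.norm_natCast]
      rcases Nat.eq_zero_or_pos j with hj0 | hj1
      · subst hj0
        simp [zero_pow (by omega : q ≠ 0)]
      · have hjn : (j : ℝ) ≤ (n : ℝ) := by
          exact_mod_cast (Finset.mem_range.mp hj).le
        have hjpos : (0 : ℝ) < j := by exact_mod_cast hj1
        have h1 : ‖liAux R j‖ ≤ (1 + Real.log n) ^ R.length := by
          refine (IH j).trans (pow_le_pow_left₀ (l0 j) ?_ _)
          have := Real.log_le_log hjpos hjn
          linarith
        have h2 : (j : ℝ) ≤ (j : ℝ) ^ q := by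
          have : (1 : ℝ) ≤ (j : ℝ) := by exact_mod_cast hj1
          calc (j : ℝ) = (j : ℝ) ^ 1 := (pow_one _).symm
            _ ≤ (j : ℝ) ^ q := pow_le_pow_right₀ this hq
        rw [← div_eq_mul_inv]
        exact div_le_div₀ (pow_nonneg (l0 n) _) h1 hjpos h2
    calc ‖liAux (q :: R) n‖ ≤ ∑ j ∈ Finset.range n, ‖liAux R j / (j : ℂ) ^ q‖ := by
          simpa [liAux] using norm_sum_le (Finset.range n) (fun j => liAux R j / (j : ℂ) ^ q)
      _ ≤ ∑ j ∈ Finset.range n, (1 + Real.log n) ^ R.length * ((j : ℝ))⁻¹ :=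
          Finset.sum_le_sum key
      _ = (1 + Real.log n) ^ R.length * ∑ j ∈ Finset.range n, ((j : ℝ))⁻¹ := by
          rw [Finset.mul_sum]
      _ ≤ (1 + Real.log n) ^ R.length * (1 + Real.log n) :=
          mul_le_mul_of_nonneg_left (l1 n) (pow_nonneg (l0 n) _)
      _ = (1 + Real.log n) ^ (R.length + 1) := (pow_succ _ _).symm
      _ = (1 + Real.log n) ^ (q :: R).length := by simp

lemma l3 (r : ℕ) : ∃ C : ℝ, 1 ≤ C ∧
    ∀ n : ℕ, 1 ≤ n → (1 + Real.log n) ^ r ≤ C * (n : ℝ) ^ (2⁻¹ : ℝ) := by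
  refine ⟨(1 + 2 * ((r : ℝ) + 1)) ^ r, one_le_pow₀ (by nlinarith [Nat.cast_nonneg (α := ℝ) r]), fun n hn => ?_⟩
  have hx : (1 : ℝ) ≤ (n : ℝ) := by exact_mod_cast hn
  have hx0 : (0 : ℝ) < (n : ℝ) := by linarith
  set δ : ℝ := (2 * ((r : ℝ) + 1))⁻¹ with hδ
  have hδpos : 0 < δ := by positivity
  have hrp : (0 : ℝ) < (n : ℝ) ^ δ := Real.rpow_pos_of_pos hx0 δ
  have hone : (1 : ℝ) ≤ (n : ℝ) ^ δ := by
    calc (1 : ℝ) = (n : ℝ) ^ (0 : ℝ) := (Real.rpow_zero _).symm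
      _ ≤ (n : ℝ) ^ δ := Real.rpow_le_rpow_of_exponent_le hx hδpos.le
  have hlog : Real.log n ≤ 2 * ((r : ℝ) + 1) * (n : ℝ) ^ δ := by
    have h1 : Real.log ((n : ℝ) ^ δ) ≤ (n : ℝ) ^ δ :=
      (Real.log_le_sub_one_of_pos hrp).trans (by linarith)
    rw [Real.log_rpow hx0] at h1
    have h2 : (0 : ℝ) < 2 * ((r : ℝ) + 1) := by positivity
    calc Real.log n = (2 * ((r : ℝ) + 1)) * (δ * Real.log n) := by
          rw [hδ]; field_simp
      _ ≤ 2 * ((r : ℝ) + 1) * (n : ℝ) ^ δ := by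
          exact mul_le_mul_of_nonneg_left h1 h2.le
  have hstep : 1 + Real.log n ≤ (1 + 2 * ((r : ℝ) + 1)) * (n : ℝ) ^ δ := by nlinarith
  calc (1 + Real.log n) ^ r ≤ ((1 + 2 * ((r : ℝ) + 1)) * (n : ℝ) ^ δ) ^ r :=
        pow_le_pow_left₀ (l0 n) hstep r
    _ = (1 + 2 * ((r : ℝ) + 1)) ^ r * ((n : ℝ) ^ δ) ^ r := mul_pow _ _ _
    _ ≤ (1 + 2 * ((r : ℝ) + 1)) ^ r * (n : ℝ) ^ (2⁻¹ : ℝ) := by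
        have hδr : δ * (r : ℝ) ≤ 2⁻¹ := by
          rw [hδ, inv_mul_le_iff₀ (by positivity)]
          rw [mul_comm (2 * ((r : ℝ) + 1)) 2⁻¹, ← mul_assoc]
          nlinarith [Nat.cast_nonneg (α := ℝ) r]
        have : ((n : ℝ) ^ δ) ^ r = (n : ℝ) ^ (δ * (r : ℝ)) := by
          rw [← Real.rpow_natCast ((n : ℝ) ^ δ) r, ← Real.rpow_mul hx0.le]
        rw [this]
        exact mul_le_mul_of_nonneg_left
          (Real.rpow_le_rpow_of_exponent_le hx hδr) (by positivity)

lemma l4 (r q : ℕ) (hq : 2 ≤ q) :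
    Summable (fun n : ℕ => (1 + Real.log n) ^ r / (n : ℝ) ^ q) := by
  obtain ⟨C, hC1, hC⟩ := l3 r
  have hsum : Summable (fun n : ℕ => C * (1 / (n : ℝ) ^ ((3 : ℝ) / 2))) :=
    (Real.summable_one_div_nat_rpow.mpr (by norm_num)).mul_left C
  refine Summable.of_nonneg_of_le (fun n => ?_) (fun n => ?_) hsum
  · exact div_nonneg (pow_nonneg (l0 n) r) (by positivity)
  · rcases Nat.eq_zero_or_pos n with h0 | h1
    · subst h0
      rw [Nat.cast_zero, zero_pow (by omega : q ≠ 0), div_zero,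
        Real.zero_rpow (by norm_num : (3 : ℝ) / 2 ≠ 0), div_zero, mul_zero]
    · have hx : (1 : ℝ) ≤ (n : ℝ) := by exact_mod_cast h1
      have hx0 : (0 : ℝ) < (n : ℝ) := by linarith
      have key : (n : ℝ) ^ (2⁻¹ : ℝ) / (n : ℝ) ^ q ≤ 1 / (n : ℝ) ^ ((3 : ℝ) / 2) := by
        have h2q : (n : ℝ) ^ 2 ≤ (n : ℝ) ^ q := pow_le_pow_right₀ hx hq
        have e1 : (n : ℝ) ^ (2⁻¹ : ℝ) / (n : ℝ) ^ 2 = 1 / (n : ℝ) ^ ((3 : ℝ) / 2) := by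
          rw [← Real.rpow_natCast (n : ℝ) 2, ← Real.rpow_sub hx0, one_div,
            ← Real.rpow_neg hx0.le]
          norm_num
        calc (n : ℝ) ^ (2⁻¹ : ℝ) / (n : ℝ) ^ q ≤ (n : ℝ) ^ (2⁻¹ : ℝ) / (n : ℝ) ^ 2 :=
              div_le_div_of_nonneg_left (by positivity) (by positivity) h2q
          _ = 1 / (n : ℝ) ^ ((3 : ℝ) / 2) := e1
      calc (1 + Real.log n) ^ r / (n : ℝ) ^ q ≤ C * (n : ℝ) ^ (2⁻¹ : ℝ) / (n : ℝ) ^ q := by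
            gcongr
            exact hC n h1
        _ = C * ((n : ℝ) ^ (2⁻¹ : ℝ) / (n : ℝ) ^ q) := by ring
        _ ≤ C * (1 / (n : ℝ) ^ ((3 : ℝ) / 2)) :=
            mul_le_mul_of_nonneg_left key (by linarith)

lemma Li_append_eq (M : List ℕ) (μ : ℕ) (w : ℂ)
    (h : Summable fun n : ℕ => liAux M.reverse n * w ^ n / (n : ℂ) ^ μ) :
    Li (M ++ [μ]) w = ∑' n : ℕ, liAux M.reverse n * w ^ n / (n : ℂ) ^ μ := by
  have h1 : (M ++ [μ]).reverse = μ :: M.reverse := by simp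
  unfold Li
  rw [h1]
  simp only [List.tail_cons, List.headD_cons]
  apply Filter.Tendsto.limUnder_eq
  exact h.hasSum.tendsto_sum_nat.comp (Filter.tendsto_add_atTop_nat 1)

/-- Convolution identity: for a word `w` ending in `x_1` (i.e. a composition
`M ++ [m]` with positive entries) and `k ≥ 0`, for `z` in the closed unit disk,
`Li_{x_0^{k+1}w}(z) = (1/k!) ∫₀^z Li_w(t) logᵏ(z/t) dt/t`.
Prepending `x_0^{k+1}` replaces the last exponent `m` by `m + k + 1`; the path integral
`∫₀^z` is parametrized by `t = sz`, `s ∈ (0,1)`, so that `log(z/t) = -log s` and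
`dt/t = ds/s`. -/
theorem stmt_11 (M : List ℕ) (m k : ℕ) (hM : ∀ x ∈ M, 1 ≤ x) (hm : 1 ≤ m)
    (z : ℂ) (hz : ‖z‖ ≤ 1) :
    Li (M ++ [m + (k + 1)]) z
    = (1 / (k.factorial : ℂ)) *
        ∫ s in (0 : ℝ)..1, Li (M ++ [m]) (s * z) * ((-Real.log s : ℝ) : ℂ) ^ k / (s : ℂ) := by
  have hM' : ∀ x ∈ M.reverse, 1 ≤ x := fun x hx => hM x (List.mem_reverse.mp hx)
  set r := M.length with hr
  have hlen : M.reverse.length = r := by simp [hr]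
  set a : ℕ → ℂ := fun n => liAux M.reverse n with ha
  -- uniform norm bound
  have hbound : ∀ (q : ℕ), 1 ≤ q → ∀ (w : ℂ), ‖w‖ ≤ 1 → ∀ n : ℕ,
      ‖a n * w ^ n / (n : ℂ) ^ q‖ ≤ (1 + Real.log n) ^ r / (n : ℝ) ^ q := by
    intro q hq w hw n
    rw [norm_div, norm_mul, norm_pow, norm_pow, Complex.norm_natCast]
    rcases Nat.eq_zero_or_pos n with h0 | h1
    · subst h0
      rw [Nat.cast_zero, zero_pow (by omega : q ≠ 0), div_zero, div_zero]
    · have hnq : (0 : ℝ) < (n : ℝ) ^ q := by positivity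
      rw [div_le_div_iff_of_pos_right hnq]
      calc ‖a n‖ * ‖w‖ ^ n ≤ (1 + Real.log n) ^ r * 1 := by
            refine mul_le_mul ?_ (pow_le_one₀ (norm_nonneg w) hw)
              (pow_nonneg (norm_nonneg w) n) (pow_nonneg (l0 n) r)
            simpa [ha, hlen] using l2 M.reverse hM' n
        _ = (1 + Real.log n) ^ r := mul_one _
  -- summability of the target series
  have hSnorm : Summable (fun n : ℕ => ‖a n * z ^ n / (n : ℂ) ^ (m + (k + 1))‖) := by
    refine Summable.of_nonneg_of_le (fun n => norm_nonneg _)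
      (hbound (m + (k + 1)) (by omega) z hz) (l4 r (m + (k + 1)) (by omega))
  have hS1 : Summable (fun n : ℕ => a n * z ^ n / (n : ℂ) ^ (m + (k + 1))) :=
    hSnorm.of_norm
  -- summability inside the disk
  obtain ⟨C, hC1, hC⟩ := l3 r
  have hS2 : ∀ w : ℂ, ‖w‖ < 1 → Summable (fun n : ℕ => a n * w ^ n / (n : ℂ) ^ m) := by
    intro w hw
    apply Summable.of_norm
    have hsum : Summable (fun n : ℕ => C * ((n : ℝ) ^ 1 * ‖w‖ ^ n + ‖w‖ ^ n)) := by
      refine Summable.mul_left C (Summable.add ?_ ?_)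
      · exact summable_pow_mul_geometric_of_norm_lt_one 1
          (by rwa [Real.norm_eq_abs, abs_of_nonneg (norm_nonneg w)])
      · exact summable_geometric_of_lt_one (norm_nonneg w) hw
    refine Summable.of_nonneg_of_le (fun n => norm_nonneg _) (fun n => ?_) hsum
    rw [norm_div, norm_mul, norm_pow, norm_pow, Complex.norm_natCast]
    rcases Nat.eq_zero_or_pos n with h0 | h1
    · subst h0
      simp only [Nat.cast_zero, zero_pow (by omega : m ≠ 0), div_zero, pow_zero]
      nlinarith
    · have hx : (1 : ℝ) ≤ (n : ℝ) := by exact_mod_cast h1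
      have h2 : (1 : ℝ) ≤ (n : ℝ) ^ m := one_le_pow₀ hx
      have hwn : (0 : ℝ) ≤ ‖w‖ ^ n := pow_nonneg (norm_nonneg w) n
      calc ‖a n‖ * ‖w‖ ^ n / (n : ℝ) ^ m ≤ ‖a n‖ * ‖w‖ ^ n := by
            apply div_le_self (by positivity) h2
        _ ≤ ((1 + Real.log n) ^ r) * ‖w‖ ^ n := by
            refine mul_le_mul_of_nonneg_right ?_ hwn
            simpa [ha, hlen] using l2 M.reverse hM' n
        _ ≤ (C * (n : ℝ) ^ (2⁻¹ : ℝ)) * ‖w‖ ^ n :=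
            mul_le_mul_of_nonneg_right (hC n h1) hwn
        _ ≤ (C * (n : ℝ)) * ‖w‖ ^ n := by
            refine mul_le_mul_of_nonneg_right (mul_le_mul_of_nonneg_left ?_ (by linarith)) hwn
            calc (n : ℝ) ^ (2⁻¹ : ℝ) ≤ (n : ℝ) ^ (1 : ℝ) :=
                  Real.rpow_le_rpow_of_exponent_le hx (by norm_num)
              _ = (n : ℝ) := Real.rpow_one _
        _ ≤ C * ((n : ℝ) ^ 1 * ‖w‖ ^ n + ‖w‖ ^ n) := by nlinarith
  -- the coefficients of the Dirichlet series
  set c : ℕ → ℂ := fun n => a n * z ^ n / (n : ℂ) ^ m with hc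
  have hc0 : c 0 = 0 := by simp [hc, zero_pow (by omega : m ≠ 0)]
  set F : ℝ → ℂ := fun t => Li (M ++ [m]) ((Real.exp (-t) : ℝ) * z) with hF0
  -- Mellin / Dirichlet interchange
  have hp : ∀ i : ℕ, c i = 0 ∨ 0 < ((i : ℕ) : ℝ) := by
    intro i
    cases i with
    | zero => exact Or.inl hc0
    | succ j => exact Or.inr (by positivity)
  have hsre : 0 < ((k : ℂ) + 1).re := by
    simp only [Complex.add_re, Complex.natCast_re, Complex.one_re]
    positivity
  have hF : ∀ t ∈ Set.Ioi (0 : ℝ), HasSum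
      (fun n : ℕ => c n * ((Real.exp (-((n : ℕ) : ℝ) * t) : ℝ) : ℂ)) (F t) := by
    intro t ht
    have ht' : (0 : ℝ) < t := ht
    have hw : ‖((Real.exp (-t) : ℝ) : ℂ) * z‖ < 1 := by
      rw [norm_mul, Complex.norm_real, Real.norm_eq_abs, abs_of_pos (Real.exp_pos _)]
      have h1 : Real.exp (-t) < 1 := Real.exp_lt_one_iff.mpr (by linarith)
      nlinarith [Real.exp_pos (-t), norm_nonneg z]
    have hsm := hS2 _ hw
    have heq : (fun n : ℕ => c n * ((Real.exp (-((n : ℕ) : ℝ) * t) : ℝ) : ℂ))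
        = fun n : ℕ => a n * (((Real.exp (-t) : ℝ) : ℂ) * z) ^ n / (n : ℂ) ^ m := by
      funext n
      have h2 : Real.exp (-((n : ℕ) : ℝ) * t) = Real.exp (-t) ^ n := by
        rw [← Real.exp_nat_mul]; ring_nf
      simp only [hc, h2]
      push_cast
      ring
    rw [heq]
    rw [show F t = Li (M ++ [m]) ((Real.exp (-t) : ℝ) * z) from rfl]
    rw [Li_append_eq M m _ hsm]
    exact hsm.hasSum
  have hsum : Summable (fun n : ℕ => ‖c n‖ / ((n : ℕ) : ℝ) ^ (((k : ℂ) + 1).re)) := by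
    refine hSnorm.congr fun n => ?_
    rw [show (((k : ℂ) + 1).re) = ((k + 1 : ℕ) : ℝ) by
      simp only [Complex.add_re, Complex.natCast_re, Complex.one_re]; push_cast; ring,
      Real.rpow_natCast]
    simp only [hc, norm_div, norm_pow, Complex.norm_natCast]
    rw [div_div, ← pow_add]
  have hmel := hasSum_mellin hp hsre hF hsum
  -- identify the terms
  have heq2 : (fun n : ℕ => Complex.Gamma ((k : ℂ) + 1) * c n / (((n : ℕ) : ℝ) : ℂ) ^ ((k : ℂ) + 1))
      = fun n : ℕ => ((k.factorial : ℕ) : ℂ) * (a n * z ^ n / (n : ℂ) ^ (m + (k + 1))) := by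
    funext n
    rw [Complex.Gamma_nat_eq_factorial]
    cases n with
    | zero =>
      simp [hc0, zero_pow (by omega : m + (k + 1) ≠ 0)]
    | succ j =>
      have hb : (((j + 1 : ℕ) : ℝ) : ℂ) = ((j + 1 : ℕ) : ℂ) := by push_cast; ring
      have hcp : ((((j + 1 : ℕ) : ℝ)) : ℂ) ^ ((k : ℂ) + 1) = ((j + 1 : ℕ) : ℂ) ^ (k + 1 : ℕ) := by
        rw [hb, show ((k : ℂ) + 1) = ((k + 1 : ℕ) : ℂ) by push_cast; ring,
          Complex.cpow_natCast]
      rw [hcp]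
      have hne : ((j + 1 : ℕ) : ℂ) ≠ 0 := Nat.cast_ne_zero.mpr (by omega)
      simp only [hc]
      rw [pow_add]
      field_simp
      ring
  rw [heq2] at hmel
  have h5 : HasSum (fun n : ℕ => ((k.factorial : ℕ) : ℂ) * (a n * z ^ n / (n : ℂ) ^ (m + (k + 1))))
      (((k.factorial : ℕ) : ℂ) * ∑' n : ℕ, a n * z ^ n / (n : ℂ) ^ (m + (k + 1))) :=
    hS1.hasSum.mul_left _
  have h6 : mellin F ((k : ℂ) + 1)
      = ((k.factorial : ℕ) : ℂ) * ∑' n : ℕ, a n * z ^ n / (n : ℂ) ^ (m + (k + 1)) :=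
    hmel.unique h5
  -- change of variables s = exp (-t)
  have himg : (fun t : ℝ => Real.exp (-t)) '' Set.Ioi 0 = Set.Ioo 0 1 := by
    ext y
    simp only [Set.mem_image, Set.mem_Ioi, Set.mem_Ioo]
    constructor
    · rintro ⟨t, ht, rfl⟩
      exact ⟨Real.exp_pos _, Real.exp_lt_one_iff.mpr (by linarith)⟩
    · rintro ⟨h0, h1'⟩
      refine ⟨-Real.log y, ?_, by rw [neg_neg, Real.exp_log h0]⟩
      have := Real.log_neg h0 h1'
      linarith
  have hderiv : ∀ x ∈ Set.Ioi (0 : ℝ),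
      HasDerivWithinAt (fun t : ℝ => Real.exp (-t)) (-Real.exp (-x)) (Set.Ioi 0) x := by
    intro x _
    have h := ((hasDerivAt_neg x).exp)
    exact (by simpa [mul_comm] using h : HasDerivAt (fun t : ℝ => Real.exp (-t))
      (-Real.exp (-x)) x).hasDerivWithinAt
  have hinj : Set.InjOn (fun t : ℝ => Real.exp (-t)) (Set.Ioi 0) := by
    intro s₁ _ s₂ _ h
    have := Real.exp_injective h
    linarith
  have hint : (∫ s in (0 : ℝ)..1, Li (M ++ [m]) (s * z) * ((-Real.log s : ℝ) : ℂ) ^ k / (s : ℂ))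
      = mellin F ((k : ℂ) + 1) := by
    rw [intervalIntegral.integral_of_le zero_le_one,
      MeasureTheory.integral_Ioc_eq_integral_Ioo, ← himg,
      MeasureTheory.integral_image_eq_integral_abs_deriv_smul measurableSet_Ioi hderiv hinj,
      show mellin F ((k : ℂ) + 1)
        = ∫ t in Set.Ioi (0 : ℝ), ((t : ℂ)) ^ (((k : ℂ) + 1) - 1) • F t from rfl]
    apply MeasureTheory.setIntegral_congr_fun measurableSet_Ioi
    intro t ht
    have hexp : Real.exp (-t) ≠ 0 := Real.exp_ne_zero _
    have habs : |-Real.exp (-t)| = Real.exp (-t) := by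
      rw [abs_neg, abs_of_pos (Real.exp_pos _)]
    simp only [habs, Real.log_exp, neg_neg]
    rw [Complex.real_smul,
      show ((k : ℂ) + 1) - 1 = ((k : ℕ) : ℂ) by ring, Complex.cpow_natCast, smul_eq_mul,
      show F t = Li (M ++ [m]) ((Real.exp (-t) : ℝ) * z) from rfl]
    have hexpc : ((Real.exp (-t) : ℝ) : ℂ) ≠ 0 := Complex.ofReal_ne_zero.mpr hexp
    field_simp
  have hLi := Li_append_eq M (m + (k + 1)) z hS1
  rw [hLi, hint, h6]
  have hkfac : ((k.factorial : ℕ) : ℂ) ≠ 0 := Nat.cast_ne_zero.mpr k.factorial_ne_zero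
  rw [← mul_assoc, one_div, inv_mul_cancel₀ hkfac, one_mul]
end
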